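/- Two nonnegative measures on the leaves of a finite binary tree that assign the same total mass to the root and have equal product coefficients at every internal node with positive mass (and both vanish on subtrees of zero-mass nodes) are equal. -/
import Mathlib

/-- Mass of the subtree rooted at the node with root-path `p` (true = left). -/
noncomputable def subtreeMass18 (n : ℕ) (μ : (Fin n → Bool) → ℝ) (p : List Bool) : ℝ :=
  ∑ ℓ ∈ Finset.univ.filter
      (fun ℓ : Fin n → Bool => ∀ i : Fin n, (i : ℕ) < p.length → ℓ i = p.getD i false),
    μ ℓ

lemma mass_nonneg (n : ℕ) (μ : (Fin n → Bool) → ℝ) (hμ : ∀ ℓ, 0 ≤ μ ℓ) (p : List Bool) :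
    0 ≤ subtreeMass18 n μ p :=
  Finset.sum_nonneg fun ℓ _ => hμ ℓ

lemma mass_filter_eq (n : ℕ) (p : List Bool) (b : Bool) (h : p.length < n) :
    (Finset.univ.filter
      (fun ℓ : Fin n → Bool => ∀ i : Fin n, (i : ℕ) < (p ++ [b]).length → ℓ i = (p ++ [b]).getD i false))
    = (Finset.univ.filter
      (fun ℓ : Fin n → Bool => ∀ i : Fin n, (i : ℕ) < p.length → ℓ i = p.getD i false)).filter
        (fun ℓ => ℓ ⟨p.length, h⟩ = b) := by
  ext ℓ
  simp only [Finset.mem_filter, Finset.mem_univ, true_and, List.length_append,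
    List.length_singleton]
  constructor
  · intro H
    constructor
    · intro i hi
      have := H i (by omega)
      rwa [List.getD_append _ _ _ _ hi] at this
    · have := H ⟨p.length, h⟩ (by simp)
      simpa [List.getD] using this
  · rintro ⟨H1, H2⟩ i hi
    rcases lt_or_eq_of_le (Nat.lt_succ_iff.mp hi) with hi' | hi'
    · rw [List.getD_append _ _ _ _ hi']
      exact H1 i hi'
    · have : i = (⟨p.length, h⟩ : Fin n) := Fin.ext hi'
      subst this
      simpa [List.getD] using H2

lemma mass_split (n : ℕ) (μ : (Fin n → Bool) → ℝ) (p : List Bool) (h : p.length < n) :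
    subtreeMass18 n μ p = subtreeMass18 n μ (p ++ [true]) + subtreeMass18 n μ (p ++ [false]) := by
  unfold subtreeMass18
  rw [mass_filter_eq n p true h, mass_filter_eq n p false h]
  rw [← Finset.sum_filter_add_sum_filter_not _ (fun ℓ => ℓ ⟨p.length, h⟩ = true)]
  congr 1
  apply Finset.sum_congr _ (fun _ _ => rfl)
  ext ℓ
  simp [Finset.mem_filter]

/-- two nonnegative measures on the leaves of a finite binary tree with
the same root mass, vanishing together on zero-mass subtrees, and with equal product
coefficients at every internal node of positive mass, are equal. -/
theorem stmt_18 (n : ℕ) (μ ν : (Fin n → Bool) → ℝ)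
    (hμ : ∀ ℓ, 0 ≤ μ ℓ) (hν : ∀ ℓ, 0 ≤ ν ℓ)
    (hroot : subtreeMass18 n μ [] = subtreeMass18 n ν [])
    (hzero : ∀ p : List Bool, p.length ≤ n →
      (subtreeMass18 n μ p = 0 ↔ subtreeMass18 n ν p = 0))
    (hcoeff : ∀ p : List Bool, p.length < n →
      0 < subtreeMass18 n μ p → 0 < subtreeMass18 n ν p →
      (subtreeMass18 n μ (p ++ [true]) - subtreeMass18 n μ (p ++ [false])) /
          subtreeMass18 n μ p =
        (subtreeMass18 n ν (p ++ [true]) - subtreeMass18 n ν (p ++ [false])) /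
          subtreeMass18 n ν p) :
    μ = ν := by
  -- main induction: equal masses at every depth
  have key : ∀ k, k ≤ n → ∀ p : List Bool, p.length = k →
      subtreeMass18 n μ p = subtreeMass18 n ν p := by
    intro k
    induction k with
    | zero => intro _ p hp; rw [List.length_eq_zero_iff.mp hp]; exact hroot
    | succ k ih =>
      intro hk p hp
      obtain ⟨q, b, rfl⟩ : ∃ q b, p = q ++ [b] := by
        rcases List.eq_nil_or_concat p with h | ⟨q, b, rfl⟩
        · simp [h] at hp
        · exact ⟨q, b, by simp⟩
      have hq : q.length = k := by simpa using hp
      have hqn : q.length < n := by omega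
      have heq : subtreeMass18 n μ q = subtreeMass18 n ν q := ih (by omega) q hq
      have hsμ := mass_split n μ q hqn
      have hsν := mass_split n ν q hqn
      rcases eq_or_lt_of_le (mass_nonneg n μ hμ q) with h0 | hpos
      · -- zero mass: children zero
      -- μ q = 0
        have hν0 : subtreeMass18 n ν q = 0 := heq ▸ h0.symm
        have cμT : subtreeMass18 n μ (q ++ [true]) = 0 := by
          nlinarith [mass_nonneg n μ hμ (q ++ [true]), mass_nonneg n μ hμ (q ++ [false])]
        have cμF : subtreeMass18 n μ (q ++ [false]) = 0 := by
          nlinarith [mass_nonneg n μ hμ (q ++ [true]), mass_nonneg n μ hμ (q ++ [false])]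
        have cνT : subtreeMass18 n ν (q ++ [true]) = 0 := by
          nlinarith [mass_nonneg n ν hν (q ++ [true]), mass_nonneg n ν hν (q ++ [false])]
        have cνF : subtreeMass18 n ν (q ++ [false]) = 0 := by
          nlinarith [mass_nonneg n ν hν (q ++ [true]), mass_nonneg n ν hν (q ++ [false])]
        cases b
        · rw [cμF, cνF]
        · rw [cμT, cνT]
      · have hposν : 0 < subtreeMass18 n ν q := heq ▸ hpos
        have hc := hcoeff q hqn hpos hposν
        rw [div_eq_div_iff (ne_of_gt hpos) (ne_of_gt hposν), heq] at hc
        have hc' : subtreeMass18 n μ (q ++ [true]) - subtreeMass18 n μ (q ++ [false]) =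
            subtreeMass18 n ν (q ++ [true]) - subtreeMass18 n ν (q ++ [false]) := by
          have := mul_right_cancel₀ (ne_of_gt hposν) hc
          linarith [mul_right_cancel₀ (ne_of_gt hposν) hc]
        cases b <;> [skip; skip] <;> linarith
  -- conclude: leaf values
  funext ℓ
  have h1 : subtreeMass18 n μ (List.ofFn ℓ) = μ ℓ := by
    unfold subtreeMass18
    rw [show (Finset.univ.filter
        (fun ℓ' : Fin n → Bool => ∀ i : Fin n, (i : ℕ) < (List.ofFn ℓ).length →
          ℓ' i = (List.ofFn ℓ).getD i false)) = {ℓ} from ?_]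
    · simp
    · ext ℓ'
      simp only [Finset.mem_filter, Finset.mem_univ, true_and, Finset.mem_singleton,
        List.length_ofFn]
      constructor
      · intro H; funext i
        have := H i i.isLt
        rwa [List.getD_eq_getElem _ _ (by simpa using i.isLt), List.getElem_ofFn] at this
      · rintro rfl i hi
        rw [List.getD_eq_getElem _ _ (by simpa using hi), List.getElem_ofFn]
  have h2 : subtreeMass18 n ν (List.ofFn ℓ) = ν ℓ := by
    unfold subtreeMass18
    rw [show (Finset.univ.filter
        (fun ℓ' : Fin n → Bool => ∀ i : Fin n, (i : ℕ) < (List.ofFn ℓ).length →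
          ℓ' i = (List.ofFn ℓ).getD i false)) = {ℓ} from ?_]
    · simp
    · ext ℓ'
      simp only [Finset.mem_filter, Finset.mem_univ, true_and, Finset.mem_singleton,
        List.length_ofFn]
      constructor
      · intro H; funext i
        have := H i i.isLt
        rwa [List.getD_eq_getElem _ _ (by simpa using i.isLt), List.getElem_ofFn] at this
      · rintro rfl i hi
        rw [List.getD_eq_getElem _ _ (by simpa using hi), List.getElem_ofFn]
  rw [← h1, ← h2, key n le_rfl (List.ofFn ℓ) (by simp)]
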